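/- arXiv:1106.4109 — 4 statements merged into one kernel-verified Lean document; each statement's English description precedes it below -/
import Mathlib

section
/- Let f₁, f₂ : [0,∞)² → [0,∞) be continuous functions, nondecreasing in each variable, with f₁(s,s) + f₂(s,s) > 0 for all s > 0. Fix a > 0 and define F(s) = ∫₀ˢ (f₁(t,t) + f₂(t,t)) dt and g(s) = f₁(s,s) + f₂(s,s). If ∫ₐ^∞ ds / g(s) = ∞, then ∫ₐ^∞ F(s)^(-1/2) ds = ∞. -/
open Filter MeasureTheory intervalIntegral Set Topology

/-!
Write `g s = f₁ (s, s) + f₂ (s, s)`. Monotonicity gives `F s ≤ s * g s ≤ ((s + g s) / 2) ^ 2`,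
so `F s ^ (-1/2) ≥ 2 / (s + g s)`, and it suffices that `∫ 1 / (s + g s)` diverges. If it
converged, its integral over `[r/2, r]`, which is at least `(r/2) / (r + g r)` by monotonicity,
would tend to `0`. That forces `g r ≥ r` for large `r`, hence `1 / g ≤ 2 / (s + g s)` eventually,
and `∫ 1 / g` would converge as well.
-/

theorem not_integrableOn_Ioi_of_tendsto_intervalIntegral_atTop {f : ℝ → ℝ} {a : ℝ}
    (h : Tendsto (fun r => ∫ s in a..r, f s) atTop atTop) : ¬IntegrableOn f (Ioi a) :=
  fun hf =>
    not_tendsto_atTop_of_tendsto_nhds (intervalIntegral_tendsto_integral_Ioi a hf tendsto_id) h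

theorem tendsto_intervalIntegral_atTop_of_not_integrableOn_Ioi {f : ℝ → ℝ} {a : ℝ}
    (hfc : ContinuousOn f (Ici a)) (hf₀ : ∀ s ∈ Ici a, 0 ≤ f s) (hf : ¬IntegrableOn f (Ioi a)) :
    Tendsto (fun r => ∫ s in a..r, f s) atTop atTop := by
  contrapose! hf
  obtain ⟨C, hC⟩ : ∃ C, ∀ r, ∃ r', r ≤ r' ∧ ∫ s in a..r', f s < C := by
    simpa [tendsto_atTop] using hf
  refine integrableOn_Ioi_of_intervalIntegral_norm_bounded C a (l := atTop) (fun r => ?_)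
    tendsto_id ?_
  · exact (hfc.mono Icc_subset_Ici_self).integrableOn_Icc.mono_set Ioc_subset_Icc_self
  · filter_upwards [eventually_ge_atTop a] with r hr
    obtain ⟨r', hr', hr'C⟩ := hC r
    calc ∫ s in a..r, ‖f s‖ = ∫ s in a..r, f s :=
          integral_congr fun s hs => Real.norm_of_nonneg (hf₀ s (by simp_all))
      _ ≤ ∫ s in a..r', f s :=
          integral_mono_interval le_rfl hr hr'
            ((ae_restrict_iff' measurableSet_Ioc).mpr (ae_of_all _ fun s hs => hf₀ s hs.1.le))
            (hfc.mono (by simp [uIcc_of_le (hr.trans hr'), Icc_subset_Ici_self])).intervalIntegrable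
      _ ≤ C := hr'C.le

theorem MeasureTheory.IntegrableOn.tendsto_intervalIntegral_half_self {f : ℝ → ℝ} {a : ℝ}
    (hf : IntegrableOn f (Ioi a)) :
    Tendsto (fun r => ∫ s in r / 2..r, f s) atTop (𝓝 0) := by
  have hlim := (intervalIntegral_tendsto_integral_Ioi a hf tendsto_id).sub
    (intervalIntegral_tendsto_integral_Ioi a hf (tendsto_id.atTop_div_const two_pos))
  rw [sub_self] at hlim
  have hfi : ∀ b, a ≤ b → IntervalIntegrable f volume a b := fun b hb =>
    (intervalIntegrable_iff_integrableOn_Ioc_of_le hb).mpr (hf.mono_set Ioc_subset_Ioi_self)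
  refine hlim.congr' ?_
  filter_upwards [eventually_ge_atTop (2 * a), eventually_ge_atTop (0 : ℝ)] with r hr hr₀
  exact integral_interval_sub_left (hfi r (by linarith)) (hfi (r / 2) (by linarith))

theorem intervalIntegral_le_mul_of_monotoneOn {g : ℝ → ℝ} {a b : ℝ} (hab : a ≤ b)
    (hg : MonotoneOn g (Icc a b)) : ∫ t in a..b, g t ≤ (b - a) * g b := by
  have hb : b ∈ Icc a b := right_mem_Icc.mpr hab
  calc ∫ t in a..b, g t ≤ ∫ _ in a..b, g b :=
        integral_mono_on hab (uIcc_of_le hab ▸ hg).intervalIntegrable intervalIntegrable_const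
          fun t ht => hg ht hb ht.2
    _ = (b - a) * g b := by simp

theorem two_div_add_le_rpow_neg_half {F x y : ℝ} (hF : 0 < F) (hFxy : F ≤ x * y) :
    2 / (x + y) ≤ F ^ (-(1 / 2 : ℝ)) := by
  rcases le_or_gt (x + y) 0 with hxy | hxy
  · exact (div_nonpos_of_nonneg_of_nonpos zero_le_two hxy).trans (by positivity)
  have hsqrt : √F ≤ (x + y) / 2 :=
    Real.sqrt_le_iff.mpr ⟨by positivity, by nlinarith [sq_nonneg (x - y)]⟩
  rw [Real.rpow_neg hF.le, ← Real.sqrt_eq_rpow, ← inv_div]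
  exact inv_anti₀ (Real.sqrt_pos.mpr hF) hsqrt

theorem one_div_add_le_intervalIntegral_rpow_neg_half {g : ℝ → ℝ} {s : ℝ} (hs : 0 ≤ s)
    (hg : MonotoneOn g (Icc 0 s)) (hF : 0 < ∫ t in (0:ℝ)..s, g t) (hsg : 0 < s + g s) :
    1 / (s + g s) ≤ (∫ t in (0:ℝ)..s, g t) ^ (-(1 / 2 : ℝ)) := by
  have hFle : ∫ t in (0:ℝ)..s, g t ≤ s * g s := by
    simpa using intervalIntegral_le_mul_of_monotoneOn hs hg
  calc 1 / (s + g s) ≤ 2 / (s + g s) := div_le_div_of_nonneg_right one_le_two hsg.le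
    _ ≤ _ := two_div_add_le_rpow_neg_half hF hFle

theorem MeasureTheory.IntegrableOn.one_div_of_one_div_add_self {g : ℝ → ℝ} {a : ℝ} (ha : 0 < a)
    (hgc : ContinuousOn g (Ici a)) (hg₀ : ∀ s ∈ Ici a, 0 < g s) (hgm : MonotoneOn g (Ici a))
    (h : IntegrableOn (fun s => 1 / (s + g s)) (Ioi a)) :
    IntegrableOn (fun s => 1 / g s) (Ioi a) := by
  have hden : ∀ s ∈ Ici a, 0 < s + g s := fun s hs => add_pos (ha.trans_le hs) (hg₀ s hs)
  have hcont : ContinuousOn (fun s => 1 / (s + g s)) (Ici a) :=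
    continuousOn_const.div (continuousOn_id.add hgc) fun s hs => (hden s hs).ne'
  have hlower : ∀ r, 2 * a ≤ r → r / 2 / (r + g r) ≤ ∫ s in r / 2..r, 1 / (s + g s) := by
    intro r hr
    have hsub : Icc (r / 2) r ⊆ Ici a := Icc_subset_Ici_iff (by linarith) |>.mpr (by linarith)
    have hr' : r ∈ Ici a := hsub (right_mem_Icc.mpr (by linarith))
    calc r / 2 / (r + g r) = ∫ _ in r / 2..r, 1 / (r + g r) := by
          simp only [one_div, intervalIntegral.integral_const, smul_eq_mul]; ring
      _ ≤ ∫ s in r / 2..r, 1 / (s + g s) :=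
        integral_mono_on (by linarith) intervalIntegrable_const
          ((hcont.mono (uIcc_of_le (by linarith : r / 2 ≤ r) ▸ hsub)).intervalIntegrable)
          fun s hs => one_div_le_one_div_of_le (hden s (hsub hs))
            (add_le_add hs.2 (hgm (hsub hs) hr' hs.2))
  have hdominant : ∀ᶠ s in atTop, s ≤ g s := by
    filter_upwards [h.tendsto_intervalIntegral_half_self.eventually
      (gt_mem_nhds (by norm_num : (0 : ℝ) < 1 / 4)), eventually_ge_atTop (2 * a)] with r hsmall hr
    have hr' : r ∈ Ici a := by simp only [mem_Ici]; linarith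
    have := (hlower r hr).trans_lt hsmall
    rw [div_lt_iff₀ (hden r hr')] at this
    linarith
  have hO : (fun s => 1 / g s) =O[atTop] fun s => 1 / (s + g s) := by
    refine Asymptotics.IsBigO.of_bound 2 ?_
    filter_upwards [hdominant, eventually_ge_atTop a] with s hs hsa
    rw [Real.norm_of_nonneg (one_div_pos.mpr (hg₀ s hsa)).le,
      Real.norm_of_nonneg (one_div_pos.mpr (hden s hsa)).le,
      mul_one_div, div_le_div_iff₀ (hg₀ s hsa) (hden s hsa)]
    linarith
  have hloc : LocallyIntegrableOn (fun s => 1 / g s) (Ici a) :=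
    (continuousOn_const.div hgc fun s hs => (hg₀ s hs).ne').locallyIntegrableOn measurableSet_Ici
  exact Iff.mp integrableOn_Ici_iff_integrableOn_Ioi
    (hloc.integrableOn_of_isBigO_atTop hO ⟨Ioi a, Ioi_mem_atTop a, h⟩)

theorem zhangliu_implies_kellerosserman_general
    (a : ℝ) (ha : 0 < a) (f₁ f₂ : ℝ × ℝ → ℝ)
    (hf₁c : Continuous f₁) (hf₂c : Continuous f₂)
    (hf₁mono : ∀ x₁ x₂ y₁ y₂ : ℝ, 0 ≤ x₁ → x₁ ≤ x₂ → 0 ≤ y₁ → y₁ ≤ y₂ →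
      f₁ (x₁, y₁) ≤ f₁ (x₂, y₂))
    (hf₂mono : ∀ x₁ x₂ y₁ y₂ : ℝ, 0 ≤ x₁ → x₁ ≤ x₂ → 0 ≤ y₁ → y₁ ≤ y₂ →
      f₂ (x₁, y₁) ≤ f₂ (x₂, y₂))
    (hpos : ∀ s : ℝ, 0 < s → 0 < f₁ (s, s) + f₂ (s, s))
    (hdiv : Tendsto (fun r => ∫ s in a..r, 1 / (f₁ (s, s) + f₂ (s, s))) atTop atTop) :
    Tendsto (fun r => ∫ s in a..r,
      (∫ t in (0:ℝ)..s, (f₁ (t, t) + f₂ (t, t))) ^ (-(1/2 : ℝ))) atTop atTop := by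
  set g : ℝ → ℝ := fun s => f₁ (s, s) + f₂ (s, s)
  have hgc : Continuous g := by fun_prop
  have hgm : MonotoneOn g (Ici 0) := fun s hs t _ hst =>
    add_le_add (hf₁mono s t s t hs hst hs hst) (hf₂mono s t s t hs hst hs hst)
  have hga : ∀ s ∈ Ici a, 0 < g s := fun s hs => hpos s (ha.trans_le hs)
  have hFpos : ∀ s ∈ Ici a, 0 < ∫ t in (0:ℝ)..s, g t := fun s hs =>
    intervalIntegral_pos_of_pos_on (hgc.intervalIntegrable 0 s)
      (fun t ht => hpos t ht.1) (ha.trans_le hs)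
  have hcompare : ∀ s ∈ Ioi a, ‖1 / (s + g s)‖ ≤ (∫ t in (0:ℝ)..s, g t) ^ (-(1/2 : ℝ)) := by
    intro s hs
    have hsg : 0 < s + g s := add_pos (ha.trans hs) (hga s hs.out.le)
    rw [Real.norm_of_nonneg (one_div_pos.mpr hsg).le]
    exact one_div_add_le_intervalIntegral_rpow_neg_half (ha.trans hs).le
      (hgm.mono Icc_subset_Ici_self) (hFpos s hs.out.le) hsg
  refine tendsto_intervalIntegral_atTop_of_not_integrableOn_Ioi
    ((continuous_primitive hgc.intervalIntegrable 0).continuousOn.rpow_const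
      fun s hs => Or.inl (hFpos s hs).ne')
    (fun s hs => Real.rpow_nonneg (hFpos s hs).le _) fun hint => ?_
  have hint' : IntegrableOn (fun s => 1 / (s + g s)) (Ioi a) :=
    hint.mono' (measurable_const.div (measurable_id.add hgc.measurable)).aestronglyMeasurable
      ((ae_restrict_iff' measurableSet_Ioi).mpr (ae_of_all _ hcompare))
  exact not_integrableOn_Ioi_of_tendsto_intervalIntegral_atTop hdiv
    (hint'.one_div_of_one_div_add_self ha hgc.continuousOn hga
      (hgm.mono (Ici_subset_Ici.mpr ha.le)))

theorem zhangliu_implies_kellerosserman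
    (a : ℝ) (ha : 0 < a) (f₁ f₂ : ℝ × ℝ → ℝ)
    (hf₁c : Continuous f₁) (hf₂c : Continuous f₂)
    (hf₁nn : ∀ x y : ℝ, 0 ≤ x → 0 ≤ y → 0 ≤ f₁ (x, y))
    (hf₂nn : ∀ x y : ℝ, 0 ≤ x → 0 ≤ y → 0 ≤ f₂ (x, y))
    (hf₁mono : ∀ x₁ x₂ y₁ y₂ : ℝ, 0 ≤ x₁ → x₁ ≤ x₂ → 0 ≤ y₁ → y₁ ≤ y₂ →
      f₁ (x₁, y₁) ≤ f₁ (x₂, y₂))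
    (hf₂mono : ∀ x₁ x₂ y₁ y₂ : ℝ, 0 ≤ x₁ → x₁ ≤ x₂ → 0 ≤ y₁ → y₁ ≤ y₂ →
      f₂ (x₁, y₁) ≤ f₂ (x₂, y₂))
    (hpos : ∀ s : ℝ, 0 < s → 0 < f₁ (s, s) + f₂ (s, s))
    (hdiv : Tendsto (fun r => ∫ s in a..r, 1 / (f₁ (s, s) + f₂ (s, s))) atTop atTop) :
    Tendsto (fun r => ∫ s in a..r,
      (∫ t in (0:ℝ)..s, (f₁ (t, t) + f₂ (t, t))) ^ (-(1/2 : ℝ))) atTop atTop :=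
  zhangliu_implies_kellerosserman_general a ha f₁ f₂ hf₁c hf₂c hf₁mono hf₂mono hpos hdiv
end

section
/- Let p > 1, b > 0, and let g : [0,∞) → [0,∞) be continuous with G(s) = ∫₀ˢ g(t) dt. Define I(r) = ∫_b^r G(t)^{-1/p} dt for r ≥ b, and assume G(t) > 0 for t ≥ b and I(r) → ∞ as r → ∞. Suppose w : [0,R] → ℝ is C¹, w(0) = b, w' ≥ 0, and w'(r) ≤ K · G(w(r))^{1/p} on [0,R] for some constant K > 0. Then I(w(R)) ≤ K·R, and therefore w(R) ≤ I^{-1}(K·R), a bound independent of w. -/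
/-!
Along `w`, `r ↦ I (w r) - K r` is nonincreasing: by the chain rule its derivative is
`G(w)^{-1/p} w' - K ≤ 0`, by the differential inequality. Since `I (w 0) = I b = 0`, this gives
`I (w R) ≤ K R`. The Keller–Osserman condition makes the increasing function `I` a bijection of
`[b, ∞)` onto `[0, ∞)`, so the bound can be inverted.
-/

open Set Filter intervalIntegral

theorem sub_le_mul_sub_of_hasDerivAt_le {f f' : ℝ → ℝ} {a b C : ℝ} (hab : a ≤ b)
    (hf : ∀ x ∈ Icc a b, HasDerivAt f (f' x) x) (hle : ∀ x ∈ Icc a b, f' x ≤ C) :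
    f b - f a ≤ C * (b - a) := by
  have hmem : ∀ x ∈ interior (Icc a b), x ∈ Icc a b := fun x hx => interior_subset hx
  refine (convex_Icc a b).image_sub_le_mul_sub_of_deriv_le
    (fun x hx => (hf x hx).continuousAt.continuousWithinAt)
    (fun x hx => (hf x (hmem x hx)).differentiableAt.differentiableWithinAt)
    (fun x hx => ?_) a (left_mem_Icc.2 hab) b (right_mem_Icc.2 hab) hab
  rw [(hf x (hmem x hx)).deriv]
  exact hle x (hmem x hx)

theorem StrictMonoOn.le_invFunOn {α β : Type*} [LinearOrder α] [Nonempty α] [Preorder β]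
    {f : α → β} {s : Set α} (hf : StrictMonoOn f s) {x : α} {y : β} (hx : x ∈ s)
    (hy : ∃ z ∈ s, f z = y) (hxy : f x ≤ y) : x ≤ Function.invFunOn f s y :=
  (hf.le_iff_le hx (Function.invFunOn_mem hy)).1 (by rwa [Function.invFunOn_eq hy])

theorem Real.rpow_neg_mul_le_of_le_mul_rpow {x y K q : ℝ} (hx : 0 < x) (h : y ≤ K * x ^ q) :
    x ^ (-q) * y ≤ K :=
  calc x ^ (-q) * y ≤ x ^ (-q) * (K * x ^ q) := by gcongr
    _ = K := by rw [Real.rpow_neg hx.le]; field_simp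

section IntegralFromBase

variable {f : ℝ → ℝ} {b : ℝ}

theorem hasDerivAt_integral_of_continuousAt_Ici (hfm : Measurable f)
    (hf : ∀ s ∈ Ici b, ContinuousAt f s) {t : ℝ} (ht : b ≤ t) :
    HasDerivAt (fun r => ∫ s in b..r, f s) (f t) t := by
  have hint : IntervalIntegrable f MeasureTheory.volume b t :=
    ContinuousOn.intervalIntegrable fun s hs =>
      (hf s (by rw [uIcc_of_le ht] at hs; exact hs.1)).continuousWithinAt
  exact integral_hasDerivAt_right hint hfm.stronglyMeasurable.stronglyMeasurableAtFilter
    (hf t ht)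

theorem strictMonoOn_integral_of_pos (hfm : Measurable f) (hf : ∀ s ∈ Ici b, ContinuousAt f s)
    (hpos : ∀ s ∈ Ici b, 0 < f s) : StrictMonoOn (fun r => ∫ s in b..r, f s) (Ici b) := by
  refine strictMonoOn_of_deriv_pos (convex_Ici b) (fun t ht =>
    (hasDerivAt_integral_of_continuousAt_Ici hfm hf ht).continuousAt.continuousWithinAt)
    fun t ht => ?_
  rw [interior_Ici] at ht
  rw [(hasDerivAt_integral_of_continuousAt_Ici hfm hf (Ioi_subset_Ici_self ht)).deriv]
  exact hpos t (Ioi_subset_Ici_self ht)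

end IntegralFromBase

theorem keller_osserman_bound_general
    (p b K R : ℝ) (hK : 0 < K) (hR : 0 < R)
    (g : ℝ → ℝ) (hgc : Continuous g)
    (hGpos : ∀ t : ℝ, b ≤ t → 0 < ∫ s in (0:ℝ)..t, g s)
    (hKO : Tendsto (fun r => ∫ t in b..r,
      (∫ s in (0:ℝ)..t, g s) ^ (-(1/p) : ℝ)) atTop atTop)
    (w w' : ℝ → ℝ) (hw0 : w 0 = b)
    (hw : ∀ r ∈ Icc (0:ℝ) R, HasDerivAt w (w' r) r)
    (hw'nn : ∀ r ∈ Icc (0:ℝ) R, 0 ≤ w' r)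
    (hwineq : ∀ r ∈ Icc (0:ℝ) R,
      w' r ≤ K * (∫ s in (0:ℝ)..(w r), g s) ^ (1/p : ℝ)) :
    (∫ t in b..(w R), (∫ s in (0:ℝ)..t, g s) ^ (-(1/p) : ℝ)) ≤ K * R ∧
      w R ≤ Function.invFunOn (fun r => ∫ t in b..r,
        (∫ s in (0:ℝ)..t, g s) ^ (-(1/p) : ℝ)) (Ici b) (K * R) := by
  set G : ℝ → ℝ := fun t => ∫ s in (0:ℝ)..t, g s
  set I : ℝ → ℝ := fun r => ∫ t in b..r, G t ^ (-(1/p) : ℝ)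
  have hG : Continuous G := continuous_primitive (fun _ _ => hgc.intervalIntegrable _ _) 0
  have hfm : Measurable fun t => G t ^ (-(1/p) : ℝ) := hG.measurable.pow_const _
  have hfc : ∀ t ∈ Ici b, ContinuousAt (fun t => G t ^ (-(1/p) : ℝ)) t := fun t ht =>
    hG.continuousAt.rpow_const (Or.inl (hGpos t ht).ne')
  have hw_mono : MonotoneOn w (Icc 0 R) :=
    monotoneOn_of_hasDerivWithinAt_nonneg (convex_Icc 0 R)
      (fun r hr => (hw r hr).continuousAt.continuousWithinAt)
      (fun r hr => (hw r (interior_subset hr)).hasDerivWithinAt)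
      (fun r hr => hw'nn r (interior_subset hr))
  have hwb : ∀ r ∈ Icc (0:ℝ) R, b ≤ w r := fun r hr =>
    hw0 ▸ hw_mono (left_mem_Icc.2 hR.le) hr hr.1
  have hbound : I (w R) ≤ K * R := by
    have hIw := sub_le_mul_sub_of_hasDerivAt_le hR.le
      (fun r hr => (hasDerivAt_integral_of_continuousAt_Ici hfm hfc (hwb r hr)).comp r (hw r hr))
      (fun r hr => Real.rpow_neg_mul_le_of_le_mul_rpow (hGpos _ (hwb r hr)) (hwineq r hr))
    simpa [I, hw0] using hIw
  have hI_mono : StrictMonoOn I (Ici b) :=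
    strictMonoOn_integral_of_pos hfm hfc fun t ht => Real.rpow_pos_of_pos (hGpos t ht) _
  have hKR_mem : K * R ∈ I '' Ici b := intermediate_value_Ici
    (fun t ht => (hasDerivAt_integral_of_continuousAt_Ici hfm hfc ht).continuousAt
      |>.continuousWithinAt)
    hKO (by simpa [I] using (mul_pos hK hR).le)
  exact ⟨hbound, hI_mono.le_invFunOn (hwb R (right_mem_Icc.2 hR.le)) hKR_mem hbound⟩

theorem keller_osserman_bound
    (p b K R : ℝ) (hp : 1 < p) (hb : 0 < b) (hK : 0 < K) (hR : 0 < R)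
    (g : ℝ → ℝ) (hgc : Continuous g) (hgnn : ∀ s, 0 ≤ g s)
    (hGpos : ∀ t : ℝ, b ≤ t → 0 < ∫ s in (0:ℝ)..t, g s)
    (hKO : Tendsto (fun r => ∫ t in b..r,
      (∫ s in (0:ℝ)..t, g s) ^ (-(1/p) : ℝ)) atTop atTop)
    (w w' : ℝ → ℝ) (hw0 : w 0 = b)
    (hw : ∀ r ∈ Icc (0:ℝ) R, HasDerivAt w (w' r) r)
    (hw'c : ContinuousOn w' (Icc 0 R)) (hw'nn : ∀ r ∈ Icc (0:ℝ) R, 0 ≤ w' r)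
    (hwineq : ∀ r ∈ Icc (0:ℝ) R,
      w' r ≤ K * (∫ s in (0:ℝ)..(w r), g s) ^ (1/p : ℝ)) :
    (∫ t in b..(w R), (∫ s in (0:ℝ)..t, g s) ^ (-(1/p) : ℝ)) ≤ K * R ∧
      w R ≤ Function.invFunOn (fun r => ∫ t in b..r,
        (∫ s in (0:ℝ)..t, g s) ^ (-(1/p) : ℝ)) (Ici b) (K * R) :=
  keller_osserman_bound_general p b K R hK hR g hgc hGpos hKO w w' hw0 hw hw'nn hwineq
end

section
/- Let b > 0, p > 1, N - 1 ≥ p, and let f₁, f₂ : ℝ² → ℝ be continuous, nonnegative on [0,∞)², nondecreasing in each variable, positive off zero on the diagonal, satisfying the Keller–Osserman condition ∫_a^∞ F(s)^{-1/2} ds = ∞ where F(s) = ∫₀ˢ (f₁(t,t)+f₂(t,t)) dt, with continuous nonnegative h₁,h₂,a₁,a₂. Define the successive approximations u₁⁰ = u₂⁰ = b/2 and uᵢᵏ(r) = b/2 + ∫₀ʳ ( e^{-Hᵢ(t)} t^{1-N} ∫₀ᵗ s^{N-1} e^{Hᵢ(s)} aᵢ(s) fᵢ(u₁^{k-1}(s),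 u₂^{k-1}(s)) ds )^{1/(p-1)} dt where Hᵢ(t)=∫₀ᵗ hᵢ. Then for each i and each r ≥ 0, the sequence k ↦ uᵢᵏ(r) is monotone nondecreasing, and each uᵢᵏ is a nonnegative nondecreasing function of r with uᵢᵏ(r) ≥ b/2. -/
open Set Filter Real Topology intervalIntegral MeasureTheory

/-!
Every iterate is continuous on `[0, ∞)`: the only delicate point is `t = 0`, where
`t^{1-N} ∫₀ᵗ s^{N-1} g(s) ds = O(t)` for bounded `g`. Since all integrands are nonnegative, each
iterate is at least `b/2` and nondecreasing in `r`. Since `f₁, f₂` are monotone on the quadrant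
and `x ↦ x^{1/(p-1)}` is monotone, the Picard map is order preserving on functions `≥ b/2`; as
`u⁰ = b/2 ≤ u¹`, induction gives `uᵏ ≤ uᵏ⁺¹`.
-/

theorem continuousOn_primitive_Ici {f : ℝ → ℝ} {a : ℝ} (hf : ContinuousOn f (Ici a)) :
    ContinuousOn (fun t => ∫ s in a..t, f s) (Ici a) := by
  intro t ht
  have hat : a ≤ t + 1 := by linarith [mem_Ici.1 ht]
  have hmem : Icc a (t + 1) ∈ 𝓝[Ici a] t := by
    rw [← Ici_inter_Iic]
    exact inter_mem_nhdsWithin _ (Iic_mem_nhds (lt_add_one t))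
  refine (continuousWithinAt_primitive (measure_singleton t) ?_).mono_of_mem_nhdsWithin hmem
  rw [min_self, max_eq_right hat]
  exact (hf.mono Icc_subset_Ici_self).intervalIntegrable_of_Icc hat

section RadialAverage

variable {N : ℝ} {g : ℝ → ℝ}

theorem tendsto_rpow_mul_integral_rpow_mul_nhdsGE_zero (hN : 1 ≤ N)
    (hg : ContinuousOn g (Ici 0)) :
    Tendsto (fun t => t ^ (1 - N) * ∫ s in (0:ℝ)..t, s ^ (N - 1) * g s) (𝓝[≥] 0) (𝓝 0) := by
  obtain ⟨C, hC⟩ := isCompact_Icc.exists_bound_of_continuousOn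
    (hg.mono (Icc_subset_Ici_self : Icc (0:ℝ) 1 ⊆ Ici 0))
  have hbound : ∀ t ∈ Icc (0:ℝ) 1,
      ‖t ^ (1 - N) * ∫ s in (0:ℝ)..t, s ^ (N - 1) * g s‖ ≤ C * t := by
    rintro t ⟨ht0, ht1⟩
    rcases ht0.eq_or_lt with rfl | htpos
    · simp
    have hint : ‖∫ s in (0:ℝ)..t, s ^ (N - 1) * g s‖ ≤ t ^ (N - 1) * C * |t - 0| := by
      refine norm_integral_le_of_norm_le_const fun s hs => ?_
      rw [uIoc_of_le ht0] at hs
      rw [norm_mul, norm_of_nonneg (rpow_nonneg hs.1.le _)]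
      exact mul_le_mul (rpow_le_rpow hs.1.le hs.2 (by linarith)) (hC s ⟨hs.1.le, hs.2.trans ht1⟩)
        (norm_nonneg _) (rpow_nonneg ht0 _)
    have hcancel : t ^ (1 - N) * t ^ (N - 1) = 1 := by
      rw [← rpow_add htpos, show 1 - N + (N - 1) = 0 by ring, rpow_zero]
    calc ‖t ^ (1 - N) * ∫ s in (0:ℝ)..t, s ^ (N - 1) * g s‖
        = t ^ (1 - N) * ‖∫ s in (0:ℝ)..t, s ^ (N - 1) * g s‖ := by
          rw [norm_mul, norm_of_nonneg (rpow_nonneg ht0 _)]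
      _ ≤ t ^ (1 - N) * (t ^ (N - 1) * C * t) := by
          rw [sub_zero, abs_of_pos htpos] at hint
          gcongr
      _ = C * t := by linear_combination (C * t) * hcancel
  refine squeeze_zero_norm' (a := fun t => C * t) ?_ ?_
  · filter_upwards [Icc_mem_nhdsGE zero_lt_one] with t ht using hbound t ht
  · exact ((continuous_const.mul continuous_id).tendsto' 0 0 (by simp)).mono_left
      nhdsWithin_le_nhds

theorem continuousOn_rpow_mul_integral_rpow_mul (hN : 1 ≤ N) (hg : ContinuousOn g (Ici 0)) :
    ContinuousOn (fun t => t ^ (1 - N) * ∫ s in (0:ℝ)..t, s ^ (N - 1) * g s) (Ici 0) := by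
  intro t ht
  rcases (mem_Ici.1 ht).eq_or_lt with rfl | htpos
  · simp only [ContinuousWithinAt, integral_same, mul_zero]
    exact tendsto_rpow_mul_integral_rpow_mul_nhdsGE_zero hN hg
  · exact (continuousAt_rpow_const _ _ (Or.inl htpos.ne')).continuousWithinAt.mul
      (continuousOn_primitive_Ici
        ((continuous_rpow_const (by linarith)).continuousOn.mul hg) t ht)

end RadialAverage

/-- `(u')^{p-1}` for the radial solution of `(t^{N-1} e^{H} (u')^{p-1})' = t^{N-1} e^{H} a w`,
`H t = ∫₀ᵗ h`, with `u'(0) = 0`. -/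
noncomputable def radialDerivPow (N : ℝ) (h a w : ℝ → ℝ) (t : ℝ) : ℝ :=
  exp (-(∫ s in (0:ℝ)..t, h s)) * t ^ (1 - N) *
    ∫ s in (0:ℝ)..t, s ^ (N - 1) * exp (∫ σ in (0:ℝ)..s, h σ) * a s * w s

noncomputable def picardMap (N p : ℝ) (h a : ℝ → ℝ) (f : ℝ × ℝ → ℝ) (c : ℝ) (v₁ v₂ : ℝ → ℝ)
    (r : ℝ) : ℝ :=
  c + ∫ t in (0:ℝ)..r, radialDerivPow N h a (fun s => f (v₁ s, v₂ s)) t ^ (1 / (p - 1))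

section RadialDerivPow

variable {N : ℝ} {h a w w' : ℝ → ℝ}

theorem radialDerivPow_nonneg (ha : ∀ s, 0 ≤ a s) (hw : ∀ s ∈ Ici 0, 0 ≤ w s) {t : ℝ}
    (ht : 0 ≤ t) : 0 ≤ radialDerivPow N h a w t := by
  refine mul_nonneg (by positivity) (integral_nonneg ht fun s hs => ?_)
  have := ha s
  have := hw s hs.1
  have : 0 ≤ s ^ (N - 1) := rpow_nonneg hs.1 _
  positivity

theorem continuousOn_radialDerivPow (hN : 1 ≤ N) (hh : Continuous h) (ha : Continuous a)
    (hw : ContinuousOn w (Ici 0)) : ContinuousOn (radialDerivPow N h a w) (Ici 0) := by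
  have hH : Continuous fun t => ∫ s in (0:ℝ)..t, h s :=
    continuous_primitive (fun _ _ => hh.intervalIntegrable _ _) 0
  convert (continuous_exp.comp hH.neg).continuousOn.mul
    (continuousOn_rpow_mul_integral_rpow_mul hN
      ((continuous_exp.comp hH).continuousOn.mul (ha.continuousOn.mul hw))) using 1
  funext t
  simp only [radialDerivPow, Pi.mul_apply, Pi.neg_apply, Function.comp_apply, mul_assoc]

theorem radialDerivPow_le_radialDerivPow (hN : 1 ≤ N) (hh : Continuous h) (ha : Continuous a)
    (ha0 : ∀ s, 0 ≤ a s) (hw : ContinuousOn w (Ici 0)) (hw' : ContinuousOn w' (Ici 0))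
    (hww' : ∀ s ∈ Ici 0, w s ≤ w' s) {t : ℝ} (ht : 0 ≤ t) :
    radialDerivPow N h a w t ≤ radialDerivPow N h a w' t := by
  have hH : Continuous fun t => ∫ s in (0:ℝ)..t, h s :=
    continuous_primitive (fun _ _ => hh.intervalIntegrable _ _) 0
  have hint : ∀ {v : ℝ → ℝ}, ContinuousOn v (Ici 0) → IntervalIntegrable
      (fun s => s ^ (N - 1) * exp (∫ σ in (0:ℝ)..s, h σ) * a s * v s) volume 0 t := fun hv =>
    ((((continuous_rpow_const (by linarith)).mul (continuous_exp.comp hH)).mul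
      ha).continuousOn.mul hv |>.mono Icc_subset_Ici_self).intervalIntegrable_of_Icc ht
  refine mul_le_mul_of_nonneg_left (integral_mono_on ht (hint hw) (hint hw') fun s hs => ?_)
    (by positivity)
  have := ha0 s
  have : 0 ≤ s ^ (N - 1) := rpow_nonneg hs.1 _
  exact mul_le_mul_of_nonneg_left (hww' s hs.1) (by positivity)

end RadialDerivPow

structure IsAdmissible (c : ℝ) (v : ℝ → ℝ) : Prop where
  continuousOn : ContinuousOn v (Ici 0)
  le : ∀ r ∈ Ici 0, c ≤ v r

theorem isAdmissible_const (c : ℝ) : IsAdmissible c fun _ => c :=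
  ⟨continuousOn_const, fun _ _ => le_rfl⟩

section PicardMap

variable {N p c : ℝ} {h a : ℝ → ℝ} {f : ℝ × ℝ → ℝ} {v₁ v₂ v₁' v₂' : ℝ → ℝ}

theorem continuousOn_rpow_radialDerivPow {w : ℝ → ℝ} (hN : 1 ≤ N) (hp : 1 ≤ p)
    (hh : Continuous h) (ha : Continuous a) (hw : ContinuousOn w (Ici 0)) :
    ContinuousOn (fun t => radialDerivPow N h a w t ^ (1 / (p - 1))) (Ici 0) :=
  (continuousOn_radialDerivPow hN hh ha hw).rpow_const fun _ _ =>
    Or.inr (one_div_nonneg.2 (sub_nonneg.2 hp))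

theorem IsAdmissible.continuousOn_comp (hf : Continuous f) (hv₁ : IsAdmissible c v₁)
    (hv₂ : IsAdmissible c v₂) : ContinuousOn (fun s => f (v₁ s, v₂ s)) (Ici 0) :=
  hf.comp_continuousOn (hv₁.continuousOn.prodMk hv₂.continuousOn)

theorem IsAdmissible.comp_nonneg (hc : 0 ≤ c) (hf0 : ∀ x y : ℝ, 0 ≤ x → 0 ≤ y → 0 ≤ f (x, y))
    (hv₁ : IsAdmissible c v₁) (hv₂ : IsAdmissible c v₂) : ∀ s ∈ Ici 0, 0 ≤ f (v₁ s, v₂ s) :=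
  fun s hs => hf0 _ _ (hc.trans (hv₁.le s hs)) (hc.trans (hv₂.le s hs))

theorem isAdmissible_picardMap (hc : 0 ≤ c) (hN : 1 ≤ N) (hp : 1 ≤ p) (hh : Continuous h)
    (ha : Continuous a) (ha0 : ∀ s, 0 ≤ a s) (hf : Continuous f)
    (hf0 : ∀ x y : ℝ, 0 ≤ x → 0 ≤ y → 0 ≤ f (x, y))
    (hv₁ : IsAdmissible c v₁) (hv₂ : IsAdmissible c v₂) :
    IsAdmissible c (picardMap N p h a f c v₁ v₂) where
  continuousOn := continuousOn_const.add <| continuousOn_primitive_Ici <|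
    continuousOn_rpow_radialDerivPow hN hp hh ha (hv₁.continuousOn_comp hf hv₂)
  le _ hr := le_add_of_nonneg_right <| integral_nonneg hr fun _ ht =>
    rpow_nonneg (radialDerivPow_nonneg ha0 (hv₁.comp_nonneg hc hf0 hv₂) ht.1) _

theorem monotoneOn_picardMap (hc : 0 ≤ c) (hN : 1 ≤ N) (hp : 1 ≤ p) (hh : Continuous h)
    (ha : Continuous a) (ha0 : ∀ s, 0 ≤ a s) (hf : Continuous f)
    (hf0 : ∀ x y : ℝ, 0 ≤ x → 0 ≤ y → 0 ≤ f (x, y))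
    (hv₁ : IsAdmissible c v₁) (hv₂ : IsAdmissible c v₂) :
    MonotoneOn (picardMap N p h a f c v₁ v₂) (Ici 0) := by
  intro r₁ hr₁ r₂ _ hr
  refine add_le_add_right (integral_mono_interval le_rfl hr₁ hr
    (ae_restrict_of_forall_mem measurableSet_Ioc fun t ht => rpow_nonneg
      (radialDerivPow_nonneg ha0 (hv₁.comp_nonneg hc hf0 hv₂) ht.1.le) _) ?_) c
  exact ((continuousOn_rpow_radialDerivPow hN hp hh ha (hv₁.continuousOn_comp hf hv₂)).mono
    Icc_subset_Ici_self).intervalIntegrable_of_Icc (hr₁.trans hr)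

theorem picardMap_le_picardMap (hc : 0 ≤ c) (hN : 1 ≤ N) (hp : 1 ≤ p) (hh : Continuous h)
    (ha : Continuous a) (ha0 : ∀ s, 0 ≤ a s) (hf : Continuous f)
    (hf0 : ∀ x y : ℝ, 0 ≤ x → 0 ≤ y → 0 ≤ f (x, y))
    (hfmono : ∀ x₁ x₂ y₁ y₂ : ℝ, 0 ≤ x₁ → x₁ ≤ x₂ → 0 ≤ y₁ → y₁ ≤ y₂ → f (x₁, y₁) ≤ f (x₂, y₂))
    (hv₁ : IsAdmissible c v₁) (hv₂ : IsAdmissible c v₂)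
    (hv₁' : IsAdmissible c v₁') (hv₂' : IsAdmissible c v₂')
    (h₁ : ∀ s ∈ Ici 0, v₁ s ≤ v₁' s) (h₂ : ∀ s ∈ Ici 0, v₂ s ≤ v₂' s) {r : ℝ} (hr : 0 ≤ r) :
    picardMap N p h a f c v₁ v₂ r ≤ picardMap N p h a f c v₁' v₂' r := by
  have hw := hv₁.continuousOn_comp hf hv₂
  have hw' := hv₁'.continuousOn_comp hf hv₂'
  have hint : ∀ {w : ℝ → ℝ}, ContinuousOn w (Ici 0) → IntervalIntegrable
      (fun t => radialDerivPow N h a w t ^ (1 / (p - 1))) volume 0 r := fun hw =>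
    ((continuousOn_rpow_radialDerivPow hN hp hh ha hw).mono
      Icc_subset_Ici_self).intervalIntegrable_of_Icc hr
  refine add_le_add_right (integral_mono_on hr (hint hw) (hint hw') fun t ht => ?_) c
  have hww' : ∀ s ∈ Ici 0, f (v₁ s, v₂ s) ≤ f (v₁' s, v₂' s) := fun s hs =>
    hfmono _ _ _ _ (hc.trans (hv₁.le s hs)) (h₁ s hs) (hc.trans (hv₂.le s hs)) (h₂ s hs)
  exact rpow_le_rpow (radialDerivPow_nonneg ha0 (hv₁.comp_nonneg hc hf0 hv₂) ht.1)
    (radialDerivPow_le_radialDerivPow hN hh ha ha0 hw hw' hww' ht.1)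
    (one_div_nonneg.2 (sub_nonneg.2 hp))

end PicardMap

theorem successive_approximations_monotone_general
    (b p N : ℝ) (hb : 0 < b) (hp : 1 < p) (hN : p ≤ N - 1)
    (f₁ f₂ : ℝ × ℝ → ℝ) (hf₁c : Continuous f₁) (hf₂c : Continuous f₂)
    (hf₁nn : ∀ x y : ℝ, 0 ≤ x → 0 ≤ y → 0 ≤ f₁ (x, y))
    (hf₂nn : ∀ x y : ℝ, 0 ≤ x → 0 ≤ y → 0 ≤ f₂ (x, y))
    (hf₁mono : ∀ x₁ x₂ y₁ y₂ : ℝ, 0 ≤ x₁ → x₁ ≤ x₂ → 0 ≤ y₁ → y₁ ≤ y₂ →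
      f₁ (x₁, y₁) ≤ f₁ (x₂, y₂))
    (hf₂mono : ∀ x₁ x₂ y₁ y₂ : ℝ, 0 ≤ x₁ → x₁ ≤ x₂ → 0 ≤ y₁ → y₁ ≤ y₂ →
      f₂ (x₁, y₁) ≤ f₂ (x₂, y₂))
    (h₁ h₂ a₁ a₂ : ℝ → ℝ)
    (hh₁c : Continuous h₁) (hh₂c : Continuous h₂)
    (ha₁c : Continuous a₁) (ha₂c : Continuous a₂)
    (ha₁n : ∀ t, 0 ≤ a₁ t) (ha₂n : ∀ t, 0 ≤ a₂ t)
    (u₁ u₂ : ℕ → ℝ → ℝ)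
    (hu₁0 : ∀ r, u₁ 0 r = b / 2) (hu₂0 : ∀ r, u₂ 0 r = b / 2)
    (hu₁rec : ∀ (k : ℕ) (r : ℝ), u₁ (k + 1) r = b / 2 + ∫ t in (0:ℝ)..r,
      (Real.exp (-(∫ s in (0:ℝ)..t, h₁ s)) * t ^ (1 - N) *
        ∫ s in (0:ℝ)..t, s ^ (N - 1) * Real.exp (∫ σ in (0:ℝ)..s, h₁ σ) * a₁ s *
          f₁ (u₁ k s, u₂ k s)) ^ (1 / (p - 1)))
    (hu₂rec : ∀ (k : ℕ) (r : ℝ), u₂ (k + 1) r = b / 2 + ∫ t in (0:ℝ)..r,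
      (Real.exp (-(∫ s in (0:ℝ)..t, h₂ s)) * t ^ (1 - N) *
        ∫ s in (0:ℝ)..t, s ^ (N - 1) * Real.exp (∫ σ in (0:ℝ)..s, h₂ σ) * a₂ s *
          f₂ (u₁ k s, u₂ k s)) ^ (1 / (p - 1))) :
    (∀ (k : ℕ) (r : ℝ), 0 ≤ r → b / 2 ≤ u₁ k r ∧ b / 2 ≤ u₂ k r) ∧
    (∀ k : ℕ, MonotoneOn (u₁ k) (Ici 0) ∧ MonotoneOn (u₂ k) (Ici 0)) ∧
    (∀ (k : ℕ) (r : ℝ), 0 ≤ r → u₁ k r ≤ u₁ (k + 1) r ∧ u₂ k r ≤ u₂ (k + 1) r) := by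
  have hN1 : 1 ≤ N := by linarith
  have hc : 0 ≤ b / 2 := by positivity
  have hu₁ : ∀ k, u₁ (k + 1) = picardMap N p h₁ a₁ f₁ (b / 2) (u₁ k) (u₂ k) :=
    fun k => funext (hu₁rec k)
  have hu₂ : ∀ k, u₂ (k + 1) = picardMap N p h₂ a₂ f₂ (b / 2) (u₁ k) (u₂ k) :=
    fun k => funext (hu₂rec k)
  have hadm : ∀ k, IsAdmissible (b / 2) (u₁ k) ∧ IsAdmissible (b / 2) (u₂ k) := by
    intro k
    induction k with
    | zero =>
      rw [funext hu₁0, funext hu₂0]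
      exact ⟨isAdmissible_const _, isAdmissible_const _⟩
    | succ k ih =>
      rw [hu₁, hu₂]
      exact ⟨isAdmissible_picardMap hc hN1 hp.le hh₁c ha₁c ha₁n hf₁c hf₁nn ih.1 ih.2,
        isAdmissible_picardMap hc hN1 hp.le hh₂c ha₂c ha₂n hf₂c hf₂nn ih.1 ih.2⟩
  have hstep : ∀ k, ∀ r ∈ Ici 0, u₁ k r ≤ u₁ (k + 1) r ∧ u₂ k r ≤ u₂ (k + 1) r := by
    intro k
    induction k with
    | zero =>
      intro r hr
      rw [hu₁0, hu₂0]
      exact ⟨(hadm 1).1.le r hr, (hadm 1).2.le r hr⟩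
    | succ k ih =>
      intro r hr
      rw [hu₁ k, hu₂ k, hu₁ (k + 1), hu₂ (k + 1)]
      exact ⟨picardMap_le_picardMap hc hN1 hp.le hh₁c ha₁c ha₁n hf₁c hf₁nn hf₁mono (hadm k).1
          (hadm k).2 (hadm (k + 1)).1 (hadm (k + 1)).2 (fun s hs => (ih s hs).1)
          (fun s hs => (ih s hs).2) hr,
        picardMap_le_picardMap hc hN1 hp.le hh₂c ha₂c ha₂n hf₂c hf₂nn hf₂mono (hadm k).1
          (hadm k).2 (hadm (k + 1)).1 (hadm (k + 1)).2 (fun s hs => (ih s hs).1)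
          (fun s hs => (ih s hs).2) hr⟩
  refine ⟨fun k r hr => ⟨(hadm k).1.le r hr, (hadm k).2.le r hr⟩, fun k => ?_, hstep⟩
  cases k with
  | zero => simp only [funext hu₁0, funext hu₂0, monotoneOn_const, and_self]
  | succ k =>
    rw [hu₁, hu₂]
    exact ⟨monotoneOn_picardMap hc hN1 hp.le hh₁c ha₁c ha₁n hf₁c hf₁nn (hadm k).1 (hadm k).2,
      monotoneOn_picardMap hc hN1 hp.le hh₂c ha₂c ha₂n hf₂c hf₂nn (hadm k).1 (hadm k).2⟩

theorem successive_approximations_monotone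
    (b p N aKO : ℝ) (hb : 0 < b) (hp : 1 < p) (hN : p ≤ N - 1) (haKO : 0 < aKO)
    (f₁ f₂ : ℝ × ℝ → ℝ) (hf₁c : Continuous f₁) (hf₂c : Continuous f₂)
    (hf₁nn : ∀ x y : ℝ, 0 ≤ x → 0 ≤ y → 0 ≤ f₁ (x, y))
    (hf₂nn : ∀ x y : ℝ, 0 ≤ x → 0 ≤ y → 0 ≤ f₂ (x, y))
    (hf₁mono : ∀ x₁ x₂ y₁ y₂ : ℝ, 0 ≤ x₁ → x₁ ≤ x₂ → 0 ≤ y₁ → y₁ ≤ y₂ →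
      f₁ (x₁, y₁) ≤ f₁ (x₂, y₂))
    (hf₂mono : ∀ x₁ x₂ y₁ y₂ : ℝ, 0 ≤ x₁ → x₁ ≤ x₂ → 0 ≤ y₁ → y₁ ≤ y₂ →
      f₂ (x₁, y₁) ≤ f₂ (x₂, y₂))
    (hfpos : ∀ s : ℝ, 0 < s → 0 < f₁ (s, s) ∧ 0 < f₂ (s, s))
    (hKO : Tendsto (fun r => ∫ s in aKO..r,
      (∫ t in (0:ℝ)..s, (f₁ (t, t) + f₂ (t, t))) ^ (-(1/2 : ℝ))) atTop atTop)
    (h₁ h₂ a₁ a₂ : ℝ → ℝ)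
    (hh₁c : Continuous h₁) (hh₂c : Continuous h₂)
    (ha₁c : Continuous a₁) (ha₂c : Continuous a₂)
    (hh₁n : ∀ t, 0 ≤ h₁ t) (hh₂n : ∀ t, 0 ≤ h₂ t)
    (ha₁n : ∀ t, 0 ≤ a₁ t) (ha₂n : ∀ t, 0 ≤ a₂ t)
    (u₁ u₂ : ℕ → ℝ → ℝ)
    (hu₁0 : ∀ r, u₁ 0 r = b / 2) (hu₂0 : ∀ r, u₂ 0 r = b / 2)
    (hu₁rec : ∀ (k : ℕ) (r : ℝ), u₁ (k + 1) r = b / 2 + ∫ t in (0:ℝ)..r,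
      (Real.exp (-(∫ s in (0:ℝ)..t, h₁ s)) * t ^ (1 - N) *
        ∫ s in (0:ℝ)..t, s ^ (N - 1) * Real.exp (∫ σ in (0:ℝ)..s, h₁ σ) * a₁ s *
          f₁ (u₁ k s, u₂ k s)) ^ (1 / (p - 1)))
    (hu₂rec : ∀ (k : ℕ) (r : ℝ), u₂ (k + 1) r = b / 2 + ∫ t in (0:ℝ)..r,
      (Real.exp (-(∫ s in (0:ℝ)..t, h₂ s)) * t ^ (1 - N) *
        ∫ s in (0:ℝ)..t, s ^ (N - 1) * Real.exp (∫ σ in (0:ℝ)..s, h₂ σ) * a₂ s *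
          f₂ (u₁ k s, u₂ k s)) ^ (1 / (p - 1))) :
    (∀ (k : ℕ) (r : ℝ), 0 ≤ r → b / 2 ≤ u₁ k r ∧ b / 2 ≤ u₂ k r) ∧
    (∀ k : ℕ, MonotoneOn (u₁ k) (Ici 0) ∧ MonotoneOn (u₂ k) (Ici 0)) ∧
    (∀ (k : ℕ) (r : ℝ), 0 ≤ r → u₁ k r ≤ u₁ (k + 1) r ∧ u₂ k r ≤ u₂ (k + 1) r) :=
  successive_approximations_monotone_general b p N hb hp hN f₁ f₂ hf₁c hf₂c hf₁nn hf₂nn hf₁mono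
    hf₂mono h₁ h₂ a₁ a₂ hh₁c hh₂c ha₁c ha₂c ha₁n ha₂n u₁ u₂ hu₁0 hu₂0 hu₁rec hu₂rec
end

section
/- Let p > 1, b > 0, a continuous nonnegative w : [0,∞) → [b,∞) nondecreasing and C¹, and G : [0,∞) → (0,∞) continuous nondecreasing on [b,∞). Suppose w'(r) ≤ α(r) + β(r)·G(w(r))^{1/p} for all r ≥ R, where α, β ≥ 0 are continuous. Then for all r ≥ R, ∫_{w(R)}^{w(r)} G(t)^{-1/p} dt ≤ ∫_R^r ( α(t)·G(w(t))^{-1/p} + β(t) ) dt ≤ G(w(R))^{-1/p} ∫_R^r α(t) dt + ∫_R^r β(t) dt. -/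
/-!
Substituting `u = w t` turns `∫_{w R}^{w r} G^{-1/p}` into `∫_R^r w' · G(w)^{-1/p}`, and dividing the
differential inequality by `G(w)^{1/p}` bounds the integrand by `α · G(w)^{-1/p} + β`. Since `w` and
`G` are nondecreasing and `-1/p < 0`, the weight `G(w t)^{-1/p}` is largest at `t = R`.
-/

open Set intervalIntegral

theorem mul_rpow_neg_le_of_le_add_mul_rpow {x y a c s : ℝ} (hx : 0 < x)
    (h : y ≤ a + c * x ^ s) : y * x ^ (-s) ≤ a * x ^ (-s) + c :=
  calc y * x ^ (-s) ≤ (a + c * x ^ s) * x ^ (-s) :=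
        mul_le_mul_of_nonneg_right h (Real.rpow_nonneg hx.le _)
    _ = a * x ^ (-s) + c := by
        rw [add_mul, mul_assoc, ← Real.rpow_add hx, add_neg_cancel, Real.rpow_zero, mul_one]

namespace intervalIntegral

theorem integral_comp_le_of_mul_deriv_le {f f' g h : ℝ → ℝ} {a b : ℝ} (hab : a ≤ b)
    (hf : ∀ x ∈ uIcc a b, HasDerivAt f (f' x) x) (hf' : ContinuousOn f' (uIcc a b))
    (hg : ContinuousOn g (f '' uIcc a b)) (hh : IntervalIntegrable h MeasureTheory.volume a b)
    (hle : ∀ x ∈ Icc a b, f' x * g (f x) ≤ h x) :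
    ∫ u in f a..f b, g u ≤ ∫ x in a..b, h x := by
  have hfc : ContinuousOn f (uIcc a b) := fun x hx => (hf x hx).continuousAt.continuousWithinAt
  have hgf : ContinuousOn (g ∘ f) (uIcc a b) := hg.comp hfc (mapsTo_image f _)
  rw [← integral_comp_mul_deriv' hf hf' hg]
  refine integral_mono_on hab (hgf.mul hf').intervalIntegrable hh fun x hx => ?_
  simpa only [Function.comp_apply, mul_comm] using hle x hx

theorem integral_mul_le_const_mul_integral {f φ : ℝ → ℝ} {a b c : ℝ} (hab : a ≤ b)
    (hf : IntervalIntegrable f MeasureTheory.volume a b)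
    (hfφ : IntervalIntegrable (fun x => f x * φ x) MeasureTheory.volume a b)
    (hf₀ : ∀ x ∈ Icc a b, 0 ≤ f x) (hφ : ∀ x ∈ Icc a b, φ x ≤ c) :
    ∫ x in a..b, f x * φ x ≤ c * ∫ x in a..b, f x := by
  rw [← integral_const_mul]
  refine integral_mono_on hab hfφ (hf.const_mul c) fun x hx => ?_
  rw [mul_comm c]
  exact mul_le_mul_of_nonneg_left (hφ x hx) (hf₀ x hx)

end intervalIntegral

theorem comparison_estimate_general
    (p b R : ℝ) (hp : 1 < p)
    (G : ℝ → ℝ) (hGc : Continuous G)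
    (hGpos : ∀ t : ℝ, b ≤ t → 0 < G t) (hGmono : MonotoneOn G (Ici b))
    (α β : ℝ → ℝ) (hαc : Continuous α) (hβc : Continuous β)
    (hαn : ∀ t, 0 ≤ α t)
    (w w' : ℝ → ℝ) (hw : ∀ r : ℝ, HasDerivAt w (w' r) r)
    (hw'c : Continuous w') (hwmono : Monotone w) (hwb : ∀ r, b ≤ w r)
    (hwineq : ∀ r : ℝ, R ≤ r → w' r ≤ α r + β r * (G (w r)) ^ (1/p : ℝ)) :
    ∀ r : ℝ, R ≤ r →
      (∫ t in (w R)..(w r), (G t) ^ (-(1/p) : ℝ)) ≤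
        (∫ t in R..r, (α t * (G (w t)) ^ (-(1/p) : ℝ) + β t)) ∧
      (∫ t in R..r, (α t * (G (w t)) ^ (-(1/p) : ℝ) + β t)) ≤
        (G (w R)) ^ (-(1/p) : ℝ) * (∫ t in R..r, α t) + ∫ t in R..r, β t := by
  intro r hr
  have hGw : ∀ t, 0 < G (w t) := fun t => hGpos _ (hwb t)
  have hGrpow : ContinuousOn (fun t => G t ^ (-(1/p) : ℝ)) (Ici b) :=
    hGc.continuousOn.rpow_const fun t ht => Or.inl (hGpos t ht).ne'
  have hwc : Continuous w := continuous_iff_continuousAt.2 fun t => (hw t).continuousAt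
  have hGwc : Continuous fun t => G (w t) ^ (-(1/p) : ℝ) :=
    (hGc.comp hwc).rpow_const fun t => Or.inl (hGw t).ne'
  have hαGw : Continuous fun t => α t * G (w t) ^ (-(1/p) : ℝ) := hαc.mul hGwc
  have hweight : ∀ t ∈ Icc R r, G (w t) ^ (-(1/p) : ℝ) ≤ G (w R) ^ (-(1/p) : ℝ) :=
    fun t ht => Real.rpow_le_rpow_of_nonpos (hGw R) (hGmono (hwb R) (hwb t) (hwmono ht.1))
      (neg_nonpos.2 (one_div_pos.2 (zero_lt_one.trans hp)).le)
  constructor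
  · exact integral_comp_le_of_mul_deriv_le hr (fun t _ => hw t) hw'c.continuousOn
      (hGrpow.mono (image_subset_iff.2 fun t _ => hwb t))
      ((hαGw.add hβc).intervalIntegrable _ _)
      fun t ht => mul_rpow_neg_le_of_le_add_mul_rpow (hGw t) (hwineq t ht.1)
  · rw [integral_add (hαGw.intervalIntegrable _ _) (hβc.intervalIntegrable _ _)]
    exact add_le_add_left (integral_mul_le_const_mul_integral hr (hαc.intervalIntegrable _ _)
      (hαGw.intervalIntegrable _ _) (fun t _ => hαn t) hweight) _

theorem comparison_estimate
    (p b R : ℝ) (hp : 1 < p) (hb : 0 < b) (hR : 0 ≤ R)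
    (G : ℝ → ℝ) (hGc : Continuous G)
    (hGpos : ∀ t : ℝ, b ≤ t → 0 < G t) (hGmono : MonotoneOn G (Ici b))
    (α β : ℝ → ℝ) (hαc : Continuous α) (hβc : Continuous β)
    (hαn : ∀ t, 0 ≤ α t) (hβn : ∀ t, 0 ≤ β t)
    (w w' : ℝ → ℝ) (hw : ∀ r : ℝ, HasDerivAt w (w' r) r)
    (hw'c : Continuous w') (hwmono : Monotone w) (hwb : ∀ r, b ≤ w r)
    (hwineq : ∀ r : ℝ, R ≤ r → w' r ≤ α r + β r * (G (w r)) ^ (1/p : ℝ)) :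
    ∀ r : ℝ, R ≤ r →
      (∫ t in (w R)..(w r), (G t) ^ (-(1/p) : ℝ)) ≤
        (∫ t in R..r, (α t * (G (w t)) ^ (-(1/p) : ℝ) + β t)) ∧
      (∫ t in R..r, (α t * (G (w t)) ^ (-(1/p) : ℝ) + β t)) ≤
        (G (w R)) ^ (-(1/p) : ℝ) * (∫ t in R..r, α t) + ∫ t in R..r, β t :=
  comparison_estimate_general p b R hp G hGc hGpos hGmono α β hαc hβc hαn w w' hw hw'c hwmono hwb
    hwineq
end
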